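/- (Root enumeration by a longest word) Let χ ∈ X_fin, n := |R^+(χ)|, and f : {1,...,n} → I such that the partial products w_t := s^{χ_{f,1}}_{f(1)}⋯s^{χ_{f,t}}_{f(t)} satisfy w_{y}(α_{f(y+1)}) ∈ R^+(χ) for 1 ≤ y ≤ n−1. Then the n elements w_{r-1}(α_{f(r)}) (1 ≤ r ≤ n) are pairwise distinct and R^+(χ) = { w_{r-1}(α_{f(r)}) : 1 ≤ r ≤ n }. -/

import Mathlib

/-- `ℤΠ`, the free `ℤ`-module with basis `Π = {α_1,…,α_N}`. -/
abbrev Mz (N : ℕ) := Fin N →₀ ℤ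

/-- The simple "root" `α_i`, the `i`-th basis element of `ℤΠ`. -/
noncomputable def alphav {N : ℕ} (i : Fin N) : Mz N := Finsupp.single i 1

/-- A bi-homomorphism `χ : ℤΠ × ℤΠ → ℂ*`. -/
def IsBihom {N : ℕ} (χ : Mz N → Mz N → ℂˣ) : Prop :=
  (∀ a b c : Mz N, χ a (b + c) = χ a b * χ a c) ∧
  (∀ a b c : Mz N, χ (a + b) c = χ a c * χ b c)

/-- `(m)_t := 1 + t + ⋯ + t^{m-1}`. -/
noncomputable def qnum (m : ℕ) (t : ℂ) : ℂ := ∑ j ∈ Finset.range m, t ^ j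

/-- `(m)_t! := ∏_{j=1}^m (j)_t`. -/
noncomputable def qfact (m : ℕ) (t : ℂ) : ℂ := ∏ j ∈ Finset.range m, qnum (j + 1) t

/-- `(m; t₁, t₂)! := ∏_{j=1}^m (1 - t₁^{j-1} t₂)`. -/
noncomputable def tfact (m : ℕ) (t₁ t₂ : ℂ) : ℂ := ∏ j ∈ Finset.range m, (1 - t₁ ^ j * t₂)

/-- The Cartan entry `c` (off-diagonal part) attached to `q = q_{ii}` and `r = q_{ij}q_{ji}`:
`⊥` (i.e. `-∞`) if `(m)_q!(m;q,r)! ≠ 0` for all `m`, and otherwise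
`-Max{m ∈ ℤ≥0 | (m)_q!(m;q,r)! ≠ 0}`. -/
noncomputable def cEntry (q r : ℂ) : WithBot ℤ :=
  letI := Classical.propDecidable
  if ∀ m : ℕ, qfact m q * tfact m q r ≠ 0 then ⊥
  else ((-((sSup {m : ℕ | qfact m q * tfact m q r ≠ 0} : ℕ) : ℤ) : ℤ) : WithBot ℤ)

/-- The generalized Cartan matrix `c^χ_{ij}` of a bi-homomorphism `χ`. -/
noncomputable def cMat {N : ℕ} (χ : Mz N → Mz N → ℂˣ) (i j : Fin N) : WithBot ℤ :=
  if i = j then 2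
  else cEntry (χ (alphav i) (alphav i))
    ((χ (alphav i) (alphav j) : ℂ) * (χ (alphav j) (alphav i) : ℂ))

/-- `c^χ_{ij}` as an integer (junk value `0` in the `-∞` case). -/
noncomputable def cInt {N : ℕ} (χ : Mz N → Mz N → ℂˣ) (i j : Fin N) : ℤ :=
  (cMat χ i j).unbotD 0

/-- The reflection `s^χ_i ∈ Aut_ℤ(ℤΠ)`, `s^χ_i(α_j) = α_j - c^χ_{ij} α_i`,
extended `ℤ`-linearly. -/
noncomputable def sMap {N : ℕ} (χ : Mz N → Mz N → ℂˣ) (i : Fin N) (v : Mz N) : Mz N :=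
  v - (v.sum fun j n => n * cInt χ i j) • alphav i

/-- The Lusztig twist `i★χ`, `(i★χ)(α,β) := χ(s^χ_i α, s^χ_i β)`. -/
noncomputable def starB {N : ℕ} (i : Fin N) (χ : Mz N → Mz N → ℂˣ) :
    Mz N → Mz N → ℂˣ :=
  fun a b => χ (sMap χ i a) (sMap χ i b)

/-- χ' is obtained from χ by a finite sequence of Lusztig twists (χ' ∼ χ). -/
def Reachable {N : ℕ} (χ χ' : Mz N → Mz N → ℂˣ) : Prop :=
  ∃ l : List (Fin N), χ' = l.foldl (fun ψ i => starB i ψ) χ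

/-- The iterated twists χ_{f,t}: χ_{f,0} = χ and χ_{f,t} = f(t)★χ_{f,t-1}. -/
noncomputable def chif {N : ℕ} (χ : Mz N → Mz N → ℂˣ) (f : ℕ → Fin N) :
    ℕ → (Mz N → Mz N → ℂˣ)
  | 0 => χ
  | (t + 1) => starB (f (t + 1)) (chif χ f t)

/-- The partial products w_t = s^{χ_{f,1}}_{f(1)} ∘ ⋯ ∘ s^{χ_{f,t}}_{f(t)}. -/
noncomputable def wt {N : ℕ} (χ : Mz N → Mz N → ℂˣ) (f : ℕ → Fin N) :
    ℕ → (Mz N → Mz N)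
  | 0 => id
  | (t + 1) => wt χ f t ∘ sMap (chif χ f (t + 1)) (f (t + 1))

/-- The nonzero elements of ℤ≥0 Π. -/
def PosCone (N : ℕ) : Set (Mz N) := {v | v ≠ 0 ∧ ∀ k, 0 ≤ v k}

/-- The elements of -ℤ≥0 Π. -/
def NegCone (N : ℕ) : Set (Mz N) := {v | ∀ k, v k ≤ 0}

/-!
The word flips one root at a time: `w_{t+1}` maps `R⁺(χ_{f,t+1})` onto the set obtained from
`A_t := w_t(R⁺(χ_{f,t}))` by replacing `β_{t+1} := w_t(α_{f(t+1)})` with `-β_{t+1}`, because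
`s_{f(t+1)}` permutes the positive roots other than `α_{f(t+1)}` and negates that one. Since
`α_{f(t+1)}` is positive for `χ_{f,t}`, `-β_{t+1} ∉ A_t`, whereas every earlier `-β_r` is still
in `A_t`. Hence the `β_r` are pairwise distinct; being `n = |R⁺(χ)|` elements of `R⁺(χ)`, they
exhaust it.
-/

open Set
open scoped Pointwise

section Flips

variable {α G : Type*} [InvolutiveNeg G] {R : Set G} {A : ℕ → Set G}

lemma image_Icc_one_subset_of_succ_mem {β : ℕ → α} {S : Set α} {n : ℕ}
    (h : ∀ t < n, β (t + 1) ∈ S) : β '' Icc 1 n ⊆ S := by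
  rintro _ ⟨r, hr, rfl⟩
  obtain ⟨t, rfl⟩ : ∃ t, r = t + 1 := ⟨r - 1, by grind⟩
  exact h t (by grind)

theorem injOn_Icc_one_and_neg_image_subset_of_flips {β : ℕ → G} (hR : ∀ v ∈ R, -v ∉ R)
    (hA : ∀ t, insert (-β (t + 1)) (A t \ {β (t + 1)}) ⊆ A (t + 1))
    (hnot : ∀ t, -β (t + 1) ∉ A t) {n : ℕ} (hβ : ∀ t < n, β (t + 1) ∈ R) :
    InjOn β (Icc 1 n) ∧ -(β '' Icc 1 n) ⊆ A n := by
  induction n with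
  | zero => simp
  | succ t ih =>
    obtain ⟨hinj, hneg⟩ := ih fun s hs => hβ s (by omega)
    have hB : β '' Icc 1 t ⊆ R := image_Icc_one_subset_of_succ_mem fun s hs => hβ s (by omega)
    have hnew : β (t + 1) ∉ β '' Icc 1 t := fun h => hnot t (hneg (neg_mem_neg.2 h))
    have hnew_neg : β (t + 1) ∉ -(β '' Icc 1 t) := fun h =>
      hR _ (hB (mem_neg.1 h)) (by simpa using hβ t (by omega))
    rw [← insert_Icc_right_eq_Icc_add_one (by omega), injOn_insert (by simp), image_insert_eq,
      neg_insert]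
    exact ⟨⟨hinj, hnew⟩,
      (insert_subset_insert (subset_sdiff_singleton hneg hnew_neg)).trans (hA t)⟩

end Flips

section Reflections

variable {N : ℕ}

lemma neg_notMem_posCone {v : Mz N} (hv : v ∈ PosCone N) : -v ∉ PosCone N := fun hneg =>
  hv.1 <| Finsupp.ext fun k => le_antisymm (by simpa using hneg.2 k) (hv.2 k)

lemma cInt_self (χ : Mz N → Mz N → ℂˣ) (i : Fin N) : cInt χ i i = 2 := by
  simp only [cInt, cMat]
  rfl

lemma sMap_eq (χ : Mz N → Mz N → ℂˣ) (i : Fin N) (v : Mz N) :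
    sMap χ i v = v - Finsupp.linearCombination ℤ (cInt χ i) v • alphav i := by
  simp [sMap, Finsupp.linearCombination_apply]

lemma sMap_alphav_self (χ : Mz N → Mz N → ℂˣ) (i : Fin N) :
    sMap χ i (alphav i) = -alphav i := by
  rw [sMap_eq, alphav, Finsupp.linearCombination_single, cInt_self]
  module

lemma sMap_involutive (χ : Mz N → Mz N → ℂˣ) (i : Fin N) : Function.Involutive (sMap χ i) := by
  intro v
  rw [sMap_eq, sMap_eq χ i v, map_sub, map_smul, alphav, Finsupp.linearCombination_single,
    cInt_self]
  module

lemma sMap_neg (χ : Mz N → Mz N → ℂˣ) (i : Fin N) (v : Mz N) :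
    sMap χ i (-v) = -sMap χ i v := by
  rw [sMap_eq, sMap_eq, map_neg]
  module

lemma wt_neg (χ : Mz N → Mz N → ℂˣ) (f : ℕ → Fin N) (t : ℕ) (v : Mz N) :
    wt χ f t (-v) = -wt χ f t v := by
  induction t generalizing v with
  | zero => rfl
  | succ t ih => simp only [wt, Function.comp_apply, sMap_neg, ih]

lemma wt_injective (χ : Mz N → Mz N → ℂˣ) (f : ℕ → Fin N) (t : ℕ) :
    Function.Injective (wt χ f t) := by
  induction t with
  | zero => exact Function.injective_id
  | succ t ih => exact ih.comp (sMap_involutive _ _).injective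

lemma reachable_chif (χ : Mz N → Mz N → ℂˣ) (f : ℕ → Fin N) (t : ℕ) :
    Reachable χ (chif χ f t) := by
  induction t with
  | zero => exact ⟨[], rfl⟩
  | succ t ih =>
    obtain ⟨l, hl⟩ := ih
    exact ⟨l ++ [f (t + 1)], by simp [chif, hl]⟩

lemma image_sMap_starB {Rp : (Mz N → Mz N → ℂˣ) → Set (Mz N)} {χ : Mz N → Mz N → ℂˣ}
    {i : Fin N} (hα : alphav i ∈ Rp (starB i χ))
    (hrefl : sMap χ i '' (Rp χ \ {alphav i}) = Rp (starB i χ) \ {alphav i}) :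
    sMap χ i '' Rp (starB i χ) = insert (-alphav i) (Rp χ \ {alphav i}) := by
  rw [← insert_sdiff_self_of_mem hα, image_insert_eq, sMap_alphav_self, ← hrefl,
    ← image_comp, (sMap_involutive χ i).comp_self, image_id]

noncomputable def wordRoot (χ : Mz N → Mz N → ℂˣ) (f : ℕ → Fin N) (r : ℕ) : Mz N :=
  wt χ f (r - 1) (alphav (f r))

lemma wordRoot_succ (χ : Mz N → Mz N → ℂˣ) (f : ℕ → Fin N) (t : ℕ) :
    wordRoot χ f (t + 1) = wt χ f t (alphav (f (t + 1))) := rfl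

variable {χ : Mz N → Mz N → ℂˣ} {Rp : (Mz N → Mz N → ℂˣ) → Set (Mz N)} (f : ℕ → Fin N)

lemma image_wt_succ (hRsimple : ∀ χ', Reachable χ χ' → ∀ i : Fin N, alphav i ∈ Rp χ')
    (hRrefl : ∀ χ', Reachable χ χ' → ∀ i : Fin N,
      sMap χ' i '' (Rp χ' \ {alphav i}) = Rp (starB i χ') \ {alphav i})
    (hstar : ∀ χ', Reachable χ χ' → ∀ i : Fin N, sMap (starB i χ') i = sMap χ' i) (t : ℕ) :
    wt χ f (t + 1) '' Rp (chif χ f (t + 1)) =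
      insert (-wordRoot χ f (t + 1)) (wt χ f t '' Rp (chif χ f t) \ {wordRoot χ f (t + 1)}) := by
  have hreach := reachable_chif χ f t
  rw [wt, chif, hstar _ hreach, image_comp,
    image_sMap_starB (hRsimple _ (reachable_chif χ f (t + 1)) _) (hRrefl _ hreach _),
    image_insert_eq, image_sdiff (wt_injective χ f t), image_singleton, wt_neg, wordRoot_succ]

lemma neg_wordRoot_notMem_image (hRsub : ∀ χ', Reachable χ χ' → Rp χ' ⊆ PosCone N)
    (hRsimple : ∀ χ', Reachable χ χ' → ∀ i : Fin N, alphav i ∈ Rp χ') (t : ℕ) :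
    -wordRoot χ f (t + 1) ∉ wt χ f t '' Rp (chif χ f t) := by
  have hreach := reachable_chif χ f t
  rw [wordRoot_succ, ← wt_neg, (wt_injective χ f t).mem_set_image]
  exact fun h => neg_notMem_posCone (hRsub _ hreach (hRsimple _ hreach _)) (hRsub _ hreach h)

end Reflections

theorem root_enumeration_general {N : ℕ} (χ : Mz N → Mz N → ℂˣ)
    (Rp : (Mz N → Mz N → ℂˣ) → Set (Mz N))
    (hRfin : (Rp χ).Finite)
    (hRsub : ∀ χ', Reachable χ χ' → Rp χ' ⊆ PosCone N)
    (hRsimple : ∀ χ', Reachable χ χ' → ∀ i : Fin N, alphav i ∈ Rp χ')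
    (hRrefl : ∀ χ', Reachable χ χ' → ∀ i : Fin N,
      sMap χ' i '' (Rp χ' \ {alphav i}) = Rp (starB i χ') \ {alphav i})
    (hstar : ∀ χ', Reachable χ χ' → ∀ i : Fin N,
      starB i (starB i χ') = χ' ∧ sMap (starB i χ') i = sMap χ' i)
    (f : ℕ → Fin N)
    (hpos : ∀ y : ℕ, 1 ≤ y → y ≤ (Rp χ).ncard - 1 →
      wt χ f y (alphav (f (y + 1))) ∈ Rp χ) :
    Set.InjOn (fun r : ℕ => wt χ f (r - 1) (alphav (f r))) (Set.Icc 1 (Rp χ).ncard) ∧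
    Rp χ = (fun r : ℕ => wt χ f (r - 1) (alphav (f r))) '' Set.Icc 1 (Rp χ).ncard := by
  have hR : ∀ v ∈ Rp χ, -v ∉ Rp χ := fun v hv hneg =>
    neg_notMem_posCone (hRsub χ ⟨[], rfl⟩ hv) (hRsub χ ⟨[], rfl⟩ hneg)
  have hmem : ∀ t < (Rp χ).ncard, wordRoot χ f (t + 1) ∈ Rp χ := by
    rintro (_ | t) ht
    · exact hRsimple χ ⟨[], rfl⟩ _
    · exact hpos (t + 1) (by omega) (by omega)
  have himage := image_wt_succ f hRsimple hRrefl fun χ' h i => (hstar χ' h i).2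
  have hinj : InjOn (wordRoot χ f) (Icc 1 (Rp χ).ncard) :=
    (injOn_Icc_one_and_neg_image_subset_of_flips hR (fun t => (himage t).ge)
      (neg_wordRoot_notMem_image f hRsub hRsimple) hmem).1
  refine ⟨hinj, (eq_of_subset_of_ncard_le (image_Icc_one_subset_of_succ_mem hmem) ?_ hRfin).symm⟩
  rw [hinj.ncard_image, ncard_Icc_nat]
  omega

/-- Root enumeration by a longest word: if w_y(α_{f(y+1)}) ∈ R⁺(χ) for 1 ≤ y ≤ n-1,
where n = |R⁺(χ)|, then the n elements w_{r-1}(α_{f(r)}) (1 ≤ r ≤ n) are pairwise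
distinct and R⁺(χ) = { w_{r-1}(α_{f(r)}) : 1 ≤ r ≤ n }. -/
theorem root_enumeration {N : ℕ} (χ : Mz N → Mz N → ℂˣ) (hχ : IsBihom χ)
    (Rp : (Mz N → Mz N → ℂˣ) → Set (Mz N))
    (hRfin : (Rp χ).Finite)
    (hRsub : ∀ χ', Reachable χ χ' → Rp χ' ⊆ PosCone N)
    (hRsimple : ∀ χ', Reachable χ χ' → ∀ i : Fin N, alphav i ∈ Rp χ')
    (hRrefl : ∀ χ', Reachable χ χ' → ∀ i : Fin N,
      sMap χ' i '' (Rp χ' \ {alphav i}) = Rp (starB i χ') \ {alphav i})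
    (hstar : ∀ χ', Reachable χ χ' → ∀ i : Fin N,
      starB i (starB i χ') = χ' ∧ sMap (starB i χ') i = sMap χ' i)
    (f : ℕ → Fin N)
    (hpos : ∀ y : ℕ, 1 ≤ y → y ≤ (Rp χ).ncard - 1 →
      wt χ f y (alphav (f (y + 1))) ∈ Rp χ) :
    Set.InjOn (fun r : ℕ => wt χ f (r - 1) (alphav (f r))) (Set.Icc 1 (Rp χ).ncard) ∧
    Rp χ = (fun r : ℕ => wt χ f (r - 1) (alphav (f r))) '' Set.Icc 1 (Rp χ).ncard :=
  root_enumeration_general χ Rp hRfin hRsub hRsimple hRrefl hstar f hpos
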